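/- arXiv:0802.1047 — 4 statements merged into one kernel-verified Lean document; each statement's English description precedes it below -/
import Mathlib

section
/- Under the additive model, the additive components are identified up to constants: if μ + Σ_l m_l(x_l) = μ' + Σ_l m_l'(x_l) for almost all x (with respect to a product measure with full support), and E[m_l(X_l)] = E[m_l'(X_l)] = 0 for all l with X having independent coordinates, then μ = μ' and m_l = m_l' almost everywhere for each l. -/
open MeasureTheory

/-! Put `g l = m_l - m_l'`, so that `∑ l, g l (x l)` is a.e. equal to the constant `μ' - μ`.
Integrating against the product measure shows that this constant is the sum of the means of the
`g l`, hence zero. To isolate one component `g l`, resample the `l`-th coordinate: the product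
measure is the image of `ν l ⊗ ⨂ j, ν j` under `(a, x) ↦ update x l a`, so for a.e. `a` the
identity `g l a + ∑_{j ≠ l} g j (x j) = 0` holds for a.e. `x`, and integrating in `x` gives
`g l a = 0`. -/

namespace MeasureTheory

variable {ι : Type*} [Fintype ι] {α : ι → Type*} [∀ i, MeasurableSpace (α i)]
  {μ : ∀ i, Measure (α i)} [∀ i, IsProbabilityMeasure (μ i)]

theorem measurePreserving_pi_update [DecidableEq ι] (i : ι) :
    MeasurePreserving (fun p : α i × (∀ j, α j) ↦ Function.update p.2 i p.1)
      ((μ i).prod (Measure.pi μ)) (Measure.pi μ) := by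
  refine ⟨by fun_prop, (Measure.pi_eq fun s hs ↦ ?_).symm⟩
  have hpre : (fun p : α i × (∀ j, α j) ↦ Function.update p.2 i p.1) ⁻¹' Set.univ.pi s =
      s i ×ˢ Set.univ.pi (Function.update s i Set.univ) := by
    ext ⟨a, x⟩
    simp only [Set.mem_preimage, Set.mem_univ_pi, Set.mem_prod]
    rw [Function.forall_update_iff (p := fun j y ↦ y ∈ s j),
      Function.forall_update_iff (p := fun j t ↦ x j ∈ t)]
    simp
  rw [Measure.map_apply (by fun_prop) (.univ_pi hs), hpre, Measure.prod_prod, Measure.pi_pi,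
    ← Finset.mul_prod_erase _ _ (Finset.mem_univ i),
    ← Finset.mul_prod_erase _ (fun j ↦ μ j (s j)) (Finset.mem_univ i),
    Function.update_self, measure_univ, one_mul]
  congr 1
  exact Finset.prod_congr rfl fun j hj ↦ by rw [Function.update_of_ne (Finset.ne_of_mem_erase hj)]

theorem integral_finset_sum_comp_eval {E : Type*} [NormedAddCommGroup E] [NormedSpace ℝ E]
    (s : Finset ι) {g : ∀ i, α i → E} (hg : ∀ i, Integrable (g i) (μ i)) :
    ∫ x, ∑ j ∈ s, g j (x j) ∂Measure.pi μ = ∑ j ∈ s, ∫ a, g j a ∂μ j := by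
  rw [integral_finsetSum s fun j _ ↦ integrable_comp_eval (hg j)]
  exact Finset.sum_congr rfl fun j _ ↦ integral_comp_eval (hg j).1

variable {g : ∀ i, α i → ℝ}

theorem eq_zero_of_finset_sum_comp_eval_ae_eq (s : Finset ι) (hg : ∀ i, Integrable (g i) (μ i))
    (hmean : ∀ i, ∫ a, g i a ∂μ i = 0) {c : ℝ}
    (h : ∀ᵐ x ∂Measure.pi μ, ∑ j ∈ s, g j (x j) = c) : c = 0 :=
  calc c = ∫ _, c ∂Measure.pi μ := by simp
    _ = ∫ x, ∑ j ∈ s, g j (x j) ∂Measure.pi μ := (integral_congr_ae h).symm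
    _ = 0 := by simp [integral_finset_sum_comp_eval s hg, hmean]

theorem ae_eq_zero_of_sum_comp_eval_ae_eq_zero (hg : ∀ i, Integrable (g i) (μ i))
    (hmean : ∀ i, ∫ a, g i a ∂μ i = 0) (h : ∀ᵐ x ∂Measure.pi μ, ∑ j, g j (x j) = 0) (i : ι) :
    g i =ᵐ[μ i] 0 := by
  classical
  have hres : ∀ᵐ p ∂(μ i).prod (Measure.pi μ), ∑ j, g j (Function.update p.2 i p.1 j) = 0 :=
    (measurePreserving_pi_update i).quasiMeasurePreserving.ae h
  filter_upwards [Measure.ae_ae_of_ae_prod hres] with a ha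
  have hrest : ∀ᵐ x ∂Measure.pi μ, ∑ j ∈ Finset.univ.erase i, g j (x j) = -g i a := by
    filter_upwards [ha] with x hx
    rw [← Finset.add_sum_erase _ _ (Finset.mem_univ i), Function.update_self,
      Finset.sum_congr rfl fun j hj ↦ by
        rw [Function.update_of_ne (Finset.ne_of_mem_erase hj)]] at hx
    linarith
  simpa using eq_zero_of_finset_sum_comp_eval_ae_eq _ hg hmean hrest

end MeasureTheory

/-- Identifiability of the additive components: if
`μ + ∑ l, m_l(x_l) = μ' + ∑ l, m_l'(x_l)` for almost all `x` w.r.t. the product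
measure `⨂ l, ν l` of the (independent) coordinate laws, and all components are
centered and integrable, then `μ = μ'` and `m_l = m_l'` `ν l`-a.e. for each `l`. -/
theorem stmt1 {d : ℕ} (ν : Fin d → Measure ℝ) [∀ l, IsProbabilityMeasure (ν l)]
    (ml ml' : Fin d → ℝ → ℝ) (μ₀ μ₀' : ℝ)
    (hint : ∀ l, Integrable (ml l) (ν l)) (hint' : ∀ l, Integrable (ml' l) (ν l))
    (hmean : ∀ l, ∫ z, ml l z ∂(ν l) = 0) (hmean' : ∀ l, ∫ z, ml' l z ∂(ν l) = 0)
    (heq : ∀ᵐ x ∂(Measure.pi ν),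
      μ₀ + ∑ l, ml l (x l) = μ₀' + ∑ l, ml' l (x l)) :
    μ₀ = μ₀' ∧ ∀ l, ml l =ᵐ[ν l] ml' l := by
  set g : Fin d → ℝ → ℝ := fun l z ↦ ml l z - ml' l z
  have hg : ∀ l, Integrable (g l) (ν l) := fun l ↦ (hint l).sub (hint' l)
  have hg_mean : ∀ l, ∫ z, g l z ∂ν l = 0 := fun l ↦ by
    simp [g, integral_sub (hint l) (hint' l), hmean, hmean']
  have hsum : ∀ᵐ x ∂Measure.pi ν, ∑ l, g l (x l) = μ₀' - μ₀ := by
    filter_upwards [heq] with x hx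
    simp only [g, Finset.sum_sub_distrib]
    linarith
  have hμ : μ₀' - μ₀ = 0 := eq_zero_of_finset_sum_comp_eval_ae_eq _ hg hg_mean hsum
  rw [hμ] at hsum
  refine ⟨by linarith, fun l ↦ ?_⟩
  filter_upwards [ae_eq_zero_of_sum_comp_eval_ae_eq_zero hg hg_mean hsum l] with z hz
  exact sub_eq_zero.1 hz
end

section
/- IPCW unbiasedness: under the right-censorship model with C independent of (X, Y), Z = min(Y, C), δ = 1_{Y ≤ C}, and survival function G(t) = P(C > t) continuous with G(t) > 0 whenever P(Y > t) > 0, one has E[ δ ψ(Z) / G(Z) | X ] = E[ ψ(Y) | X ] almost surely, for any bounded measurable ψ vanishing beyond a point τ_0 with G(τ_0) > 0. -/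
open MeasureTheory ProbabilityTheory Set
open scoped ENNReal

/-!
Since `C` is independent of `W = (X, Y)`, integrating out `C` first replaces the censoring
indicator `1{Y ≤ C}` by `P(C ≥ Y) = G(Y)`, the last equality because a continuous survival
function leaves no atoms. The weight `1 / G(Y)` cancels it, so `δ ψ(Z) / G(Z)` and `ψ(Y)` have
the same integral over every event `{W ∈ s}`, in particular over every event `{X ∈ A}`.
-/

lemma measure_singleton_eq_zero_of_continuousAt_cdf {μ : Measure ℝ} [IsProbabilityMeasure μ]
    {y : ℝ} (h : ContinuousAt (cdf μ) y) : μ {y} = 0 := by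
  rw [← measure_cdf μ, StieltjesFunction.measure_singleton, h.continuousWithinAt.leftLim_eq,
    sub_self, ENNReal.ofReal_zero]

lemma measureReal_Ici_eq_Ioi_of_continuousAt {μ : Measure ℝ} [IsProbabilityMeasure μ]
    {y : ℝ} (h : ContinuousAt (fun t ↦ μ.real (Ioi t)) y) :
    μ.real (Ici y) = μ.real (Ioi y) := by
  have hcdf : cdf μ = fun t ↦ 1 - μ.real (Ioi t) := by
    ext t
    rw [cdf_eq_real, ← compl_Iic, measureReal_compl measurableSet_Iic, probReal_univ,
      sub_sub_cancel]
  have hy : μ {y} = 0 :=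
    measure_singleton_eq_zero_of_continuousAt_cdf (by rw [hcdf]; exact continuousAt_const.sub h)
  exact measureReal_congr (Ioi_ae_eq_Ici' hy).symm

lemma abs_div_le_div_of_antitone {ψ G : ℝ → ℝ} {τ₀ M : ℝ} (hG : Antitone G) (hGτ₀ : 0 < G τ₀)
    (hψbd : ∀ t, |ψ t| ≤ M) (hψ0 : ∀ t, τ₀ < t → ψ t = 0) (t : ℝ) :
    |ψ t / G t| ≤ M / G τ₀ := by
  rcases le_or_gt t τ₀ with ht | ht
  · rw [abs_div, abs_of_pos (hGτ₀.trans_le (hG ht))]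
    exact div_le_div₀ ((abs_nonneg _).trans (hψbd t)) (hψbd t) hGτ₀ (hG ht)
  · rw [hψ0 t ht, zero_div, abs_zero]
    exact div_nonneg ((abs_nonneg _).trans (hψbd t)) hGτ₀.le

namespace ProbabilityTheory.IndepFun

variable {Ω β : Type*} [MeasurableSpace Ω] [MeasurableSpace β] {μ : Measure Ω} [IsFiniteMeasure μ]

theorem integral_comp_eq_integral_integral {γ E : Type*} [MeasurableSpace γ]
    [NormedAddCommGroup E] [NormedSpace ℝ E] {W : Ω → β} {C : Ω → γ}
    (hWC : IndepFun W C μ) (hW : Measurable W) (hC : Measurable C)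
    {F : β × γ → E} (hF : StronglyMeasurable F) (hFi : Integrable (fun ω ↦ F (W ω, C ω)) μ) :
    ∫ ω, F (W ω, C ω) ∂μ = ∫ ω, ∫ c, F (W ω, c) ∂(μ.map C) ∂μ := by
  have hmap : μ.map (fun ω ↦ (W ω, C ω)) = (μ.map W).prod (μ.map C) :=
    (indepFun_iff_map_prod_eq_prod_map_map hW.aemeasurable hC.aemeasurable).mp hWC
  have hWCm : AEMeasurable (fun ω ↦ (W ω, C ω)) μ := (hW.prodMk hC).aemeasurable
  have hFprod : Integrable F ((μ.map W).prod (μ.map C)) := by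
    rw [← hmap]
    exact (integrable_map_measure hF.aestronglyMeasurable hWCm).mpr hFi
  rw [← integral_map hWCm hF.aestronglyMeasurable, hmap, integral_prod F hFprod,
    integral_map hW.aemeasurable hFprod.integral_prod_left.aestronglyMeasurable]

variable {W : Ω → β} {C : Ω → ℝ} {T φ : β → ℝ} {G : ℝ → ℝ}

theorem integral_ipcw (hWC : IndepFun W C μ) (hW : Measurable W) (hC : Measurable C)
    (hT : Measurable T) (hφ : Measurable φ) (hGm : Measurable G)
    (hsurv : ∀ t, (μ.map C).real (Ici t) = G t) (hG : ∀ w, φ w ≠ 0 → G (T w) ≠ 0)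
    (hint : Integrable (fun ω ↦ if T (W ω) ≤ C ω then φ (W ω) / G (T (W ω)) else 0) μ) :
    ∫ ω, (if T (W ω) ≤ C ω then φ (W ω) / G (T (W ω)) else 0) ∂μ = ∫ ω, φ (W ω) ∂μ := by
  have hF : StronglyMeasurable fun p : β × ℝ ↦ if T p.1 ≤ p.2 then φ p.1 / G (T p.1) else 0 :=
    (Measurable.ite (measurableSet_le (hT.comp measurable_fst) measurable_snd)
      ((hφ.div (hGm.comp hT)).comp measurable_fst) measurable_const).stronglyMeasurable
  rw [hWC.integral_comp_eq_integral_integral hW hC hF hint]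
  congr 1 with ω
  have hind : (fun c ↦ if T (W ω) ≤ c then φ (W ω) / G (T (W ω)) else 0)
      = (Ici (T (W ω))).indicator fun _ ↦ φ (W ω) / G (T (W ω)) := by
    ext c
    simp [indicator_apply]
  rw [hind, integral_indicator_const _ measurableSet_Ici, smul_eq_mul]
  by_cases hφω : φ (W ω) = 0
  · simp [hφω]
  · rw [hsurv, mul_div_cancel₀ _ (hG _ hφω)]

theorem setIntegral_ipcw (hWC : IndepFun W C μ) (hW : Measurable W) (hC : Measurable C)
    (hT : Measurable T) (hφ : Measurable φ) (hGm : Measurable G)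
    (hsurv : ∀ t, (μ.map C).real (Ici t) = G t) (hG : ∀ w, φ w ≠ 0 → G (T w) ≠ 0)
    (hint : Integrable (fun ω ↦ if T (W ω) ≤ C ω then φ (W ω) / G (T (W ω)) else 0) μ)
    {s : Set β} (hs : MeasurableSet s) :
    ∫ ω in W ⁻¹' s, (if T (W ω) ≤ C ω then φ (W ω) / G (T (W ω)) else 0) ∂μ
      = ∫ ω in W ⁻¹' s, φ (W ω) ∂μ := by
  have hind : (W ⁻¹' s).indicator (fun ω ↦ if T (W ω) ≤ C ω then φ (W ω) / G (T (W ω)) else 0)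
      = fun ω ↦ if T (W ω) ≤ C ω then s.indicator φ (W ω) / G (T (W ω)) else 0 := by
    ext ω
    by_cases hω : W ω ∈ s <;> simp [hω]
  rw [← integral_indicator (hW hs), ← integral_indicator (hW hs), hind,
    hWC.integral_ipcw hW hC hT (hφ.indicator hs) hGm hsurv
      (fun w hw ↦ hG w fun h ↦ hw (by simp [h])) (hind ▸ hint.indicator (hW hs))]
  rfl

end ProbabilityTheory.IndepFun

lemma condExp_ae_eq_condExp_of_forall_setIntegral_eq {Ω : Type*} {m m₀ : MeasurableSpace Ω}
    {μ : Measure Ω} (hm : m ≤ m₀) [SigmaFinite (μ.trim hm)] {f g : Ω → ℝ}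
    (hf : Integrable f μ) (hg : Integrable g μ)
    (hfg : ∀ s, MeasurableSet[m] s → μ s < ∞ → ∫ ω in s, f ω ∂μ = ∫ ω in s, g ω ∂μ) :
    μ[f | m] =ᵐ[μ] μ[g | m] :=
  ae_eq_condExp_of_forall_setIntegral_eq hm hg (fun _ _ _ ↦ integrable_condExp.integrableOn)
    (fun s hs hμs ↦ by rw [setIntegral_condExp hm hf hs, hfg s hs hμs])
    stronglyMeasurable_condExp.aestronglyMeasurable

/-- IPCW conditional unbiasedness: with `Z = min(Y,C)`,
`δ = 1_{Y ≤ C}`, `G(t) = P(C > t)` continuous, `C ⊥ (X,Y)`, `ψ` bounded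
measurable vanishing beyond `τ₀` with `G(τ₀) > 0`, one has
`E[δ ψ(Z)/G(Z) | X] = E[ψ(Y) | X]` a.s. -/
theorem stmt4 {Ω : Type*} [MeasureSpace Ω] [IsProbabilityMeasure (ℙ : Measure Ω)]
    {d : ℕ} (X : Ω → (Fin d → ℝ)) (Y C : Ω → ℝ) (ψ : ℝ → ℝ) (τ₀ : ℝ) (M : ℝ)
    (hX : Measurable X) (hY : Measurable Y) (hC : Measurable C)
    (hψ : Measurable ψ) (hψbd : ∀ t, |ψ t| ≤ M) (hψ0 : ∀ t, τ₀ < t → ψ t = 0)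
    (hindep : IndepFun C (fun ω => (X ω, Y ω)) ℙ)
    (G : ℝ → ℝ) (hG : ∀ t, G t = (ℙ {ω | t < C ω}).toReal)
    (hGcont : Continuous G) (hGτ₀ : 0 < G τ₀) :
    ℙ[fun ω => (if Y ω ≤ C ω then (1:ℝ) else 0) * ψ (min (Y ω) (C ω)) /
        G (min (Y ω) (C ω)) | MeasurableSpace.comap X inferInstance]
      =ᵐ[ℙ] ℙ[fun ω => ψ (Y ω) | MeasurableSpace.comap X inferInstance] := by
  have := Measure.isProbabilityMeasure_map (μ := (ℙ : Measure Ω)) hC.aemeasurable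
  have hGIoi : G = fun t ↦ ((ℙ : Measure Ω).map C).real (Ioi t) := by
    ext t
    rw [hG, map_measureReal_apply hC measurableSet_Ioi]
    rfl
  have hsurv : ∀ t, ((ℙ : Measure Ω).map C).real (Ici t) = G t := fun t ↦ by
    rw [hGIoi] at hGcont ⊢
    exact measureReal_Ici_eq_Ioi_of_continuousAt hGcont.continuousAt
  have hGanti : Antitone G := fun a b hab ↦ by
    rw [hGIoi]
    exact measureReal_mono (Ioi_subset_Ioi hab)
  set ipcw : Ω → ℝ := fun ω ↦ if Y ω ≤ C ω then ψ (Y ω) / G (Y ω) else 0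
  have hipcw : (fun ω ↦ (if Y ω ≤ C ω then (1:ℝ) else 0) * ψ (min (Y ω) (C ω)) /
      G (min (Y ω) (C ω))) = ipcw := by
    ext ω
    by_cases h : Y ω ≤ C ω <;> simp [ipcw, h]
  have hipcw_int : Integrable ipcw ℙ :=
    (Integrable.of_bound ((hψ.comp hY).div (hGcont.measurable.comp hY)).aestronglyMeasurable
      (M / G τ₀) (.of_forall fun ω ↦ abs_div_le_div_of_antitone hGanti hGτ₀ hψbd hψ0 (Y ω))
      ).indicator (measurableSet_le hY hC)
  rw [hipcw]
  refine condExp_ae_eq_condExp_of_forall_setIntegral_eq hX.comap_le hipcw_int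
    (.of_bound (hψ.comp hY).aestronglyMeasurable M (.of_forall fun ω ↦ hψbd _)) ?_
  rintro _ ⟨A, hA, rfl⟩ -
  exact hindep.symm.setIntegral_ipcw (T := Prod.snd) (φ := ψ ∘ Prod.snd) (hX.prodMk hY) hC
    measurable_snd (hψ.comp measurable_snd) hGcont.measurable hsurv
    (fun w hw ↦ (hGτ₀.trans_le (hGanti (not_lt.mp (mt (hψ0 _) hw)))).ne') hipcw_int
    (measurable_fst hA)
end

section
/- Fourth moment order: under the same assumptions, E[M_n^4(ζ_1, ζ_2)] = O(ℓ_n^{-3d}) as ℓ_n → 0. -/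
/-!
`M_n(ζ₁, ζ₂)` vanishes unless `X₁` and `X₂` lie within `2Rℓ_n` of each other near `s`, where `R`
bounds the support of `L`; on that event it is an integral over a ball of volume `O(ℓ_nᵈ)`
against the prefactor `ℓ_n^{-2d}`, so `|M_n| = O(ℓ_n^{-d})`. Independence and the bounded density
of `X₁` near `s` give the event probability `O(ℓ_nᵈ)`, hence `E[M_n⁴] = O(ℓ_n^{-4d} ℓ_nᵈ)`.
-/

open MeasureTheory ProbabilityTheory Filter Metric Function
open scoped Topology ENNReal

section KernelPair

variable {E : Type*} [NormedAddCommGroup E] [NormedSpace ℝ E] {L g : E → ℝ} {s : Set E}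
  {R K l α : ℝ}

lemma apply_inv_smul_eq_zero_of_lt_norm (hLR : support L ⊆ closedBall 0 R) (hl : 0 < l) {v : E}
    (hv : R * l < ‖v‖) : L (l⁻¹ • v) = 0 := by
  by_contra h
  have hle : ‖l⁻¹ • v‖ ≤ R := by simpa using hLR h
  rw [norm_smul, Real.norm_eq_abs, abs_of_pos (inv_pos.2 hl), inv_mul_le_iff₀ hl] at hle
  linarith

variable [MeasurableSpace E] {μ : Measure E}

lemma near_of_integral_kernel_pair_ne_zero (hLR : support L ⊆ closedBall 0 R) (hl : 0 < l)
    (hgs : support g ⊆ s) (hRl : R * l < α) {x₁ x₂ : E}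
    (h : ∫ x, L (l⁻¹ • (x - x₁)) * L (l⁻¹ • (x - x₂)) * g x ∂μ ≠ 0) :
    x₁ ∈ thickening α s ∧ x₂ ∈ thickening α s ∧ dist x₂ x₁ ≤ 2 * (R * l) := by
  obtain ⟨x, hx⟩ : ∃ x, L (l⁻¹ • (x - x₁)) * L (l⁻¹ • (x - x₂)) * g x ≠ 0 := by
    by_contra! h0
    exact h (by simp [h0])
  simp only [ne_eq, mul_eq_zero, not_or] at hx
  obtain ⟨⟨hL₁, hL₂⟩, hgx⟩ := hx
  have hd₁ : dist x₁ x ≤ R * l := by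
    rw [dist_comm, dist_eq_norm]
    exact not_lt.1 fun hfar => hL₁ (apply_inv_smul_eq_zero_of_lt_norm hLR hl hfar)
  have hd₂ : dist x₂ x ≤ R * l := by
    rw [dist_comm, dist_eq_norm]
    exact not_lt.1 fun hfar => hL₂ (apply_inv_smul_eq_zero_of_lt_norm hLR hl hfar)
  refine ⟨mem_thickening_iff.2 ⟨x, hgs hgx, hd₁.trans_lt hRl⟩,
    mem_thickening_iff.2 ⟨x, hgs hgx, hd₂.trans_lt hRl⟩, ?_⟩
  linarith [dist_triangle_right x₂ x₁ x]

lemma abs_integral_kernel_pair_le [ProperSpace E] [IsFiniteMeasureOnCompacts μ]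
    (hLR : support L ⊆ closedBall 0 R) (hLK : ∀ v, |L v| ≤ K) (hg : ∀ x, |g x| ≤ 1) (hl : 0 < l)
    (x₁ x₂ : E) :
    |∫ x, L (l⁻¹ • (x - x₁)) * L (l⁻¹ • (x - x₂)) * g x ∂μ|
      ≤ K ^ 2 * μ.real (closedBall x₁ (R * l)) := by
  have hK : 0 ≤ K := (abs_nonneg _).trans (hLK 0)
  rw [← Real.norm_eq_abs, ← setIntegral_eq_integral_of_forall_compl_eq_zero
    (s := closedBall x₁ (R * l))]
  · refine norm_setIntegral_le_of_norm_le_const measure_closedBall_lt_top fun x _ => ?_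
    rw [Real.norm_eq_abs, abs_mul, abs_mul, sq, ← mul_one (K * K)]
    exact mul_le_mul (mul_le_mul (hLK _) (hLK _) (abs_nonneg _) hK) (hg x) (abs_nonneg _)
      (mul_nonneg hK hK)
  · intro x hx
    rw [apply_inv_smul_eq_zero_of_lt_norm hLR hl (by simpa [dist_eq_norm] using hx), zero_mul,
      zero_mul]

end KernelPair

lemma measure_mem_and_dist_le_le {Ω E : Type*} [MeasurableSpace Ω] {P : Measure Ω}
    [IsProbabilityMeasure P] [PseudoMetricSpace E] [MeasurableSpace E] [OpensMeasurableSpace E]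
    [SecondCountableTopology E] {X Y : Ω → E} (hX : Measurable X) (hY : Measurable Y)
    (hXY : IndepFun X Y P) {μ : Measure E} {ρ : E → ℝ≥0∞} (hYlaw : P.map Y = μ.withDensity ρ)
    {T : Set E} (hT : MeasurableSet T) {M : ℝ≥0∞} (hρ : ∀ y ∈ T, ρ y ≤ M) {r : ℝ} {V : ℝ≥0∞}
    (hV : ∀ x, μ (closedBall x r) ≤ V) :
    P {ω | Y ω ∈ T ∧ dist (X ω) (Y ω) ≤ r} ≤ M * V := by
  set S : Set (E × E) := {p | p.2 ∈ T ∧ dist p.1 p.2 ≤ r}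
  have hS : MeasurableSet S := (measurable_snd hT).inter
    (measurableSet_le (measurable_fst.dist measurable_snd) measurable_const)
  have hslice (x : E) : P.map Y (Prod.mk x ⁻¹' S) ≤ M * V := calc
    P.map Y (Prod.mk x ⁻¹' S) = ∫⁻ y in Prod.mk x ⁻¹' S, ρ y ∂μ := by
      rw [hYlaw, withDensity_apply _ (measurable_prodMk_left hS)]
    _ ≤ ∫⁻ _ in Prod.mk x ⁻¹' S, M ∂μ := setLIntegral_mono measurable_const fun y hy => hρ y hy.1
    _ = M * μ (Prod.mk x ⁻¹' S) := setLIntegral_const _ _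
    _ ≤ M * V := by
      gcongr
      exact (measure_mono fun y hy => mem_closedBall_comm.1 hy.2).trans (hV x)
  have := Measure.isProbabilityMeasure_map (μ := P) hX.aemeasurable
  calc P {ω | Y ω ∈ T ∧ dist (X ω) (Y ω) ≤ r} = P.map (fun ω => (X ω, Y ω)) S :=
        (Measure.map_apply (hX.prodMk hY) hS).symm
    _ = ∫⁻ x, P.map Y (Prod.mk x ⁻¹' S) ∂(P.map X) := by
      rw [(indepFun_iff_map_prod_eq_prod_map_map hX.aemeasurable hY.aemeasurable).1 hXY,
        Measure.prod_apply hS]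
    _ ≤ ∫⁻ _, M * V ∂(P.map X) := lintegral_mono hslice
    _ = M * V := by simp

lemma measureReal_mem_and_dist_le_le {Ω : Type*} [MeasurableSpace Ω] {P : Measure Ω}
    [IsProbabilityMeasure P] {d : ℕ} {X Y : Ω → Fin d → ℝ} (hX : Measurable X)
    (hY : Measurable Y) (hXY : IndepFun X Y P) {f : (Fin d → ℝ) → ℝ}
    (hYlaw : P.map Y = volume.withDensity fun y => ENNReal.ofReal (f y)) {T : Set (Fin d → ℝ)}
    (hT : MeasurableSet T) {M : ℝ} (hM : 0 ≤ M) (hfM : ∀ y ∈ T, f y ≤ M) {r : ℝ} (hr : 0 ≤ r) :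
    P.real {ω | Y ω ∈ T ∧ dist (X ω) (Y ω) ≤ r} ≤ M * (2 * r) ^ d := by
  refine ENNReal.toReal_le_of_le_ofReal (by positivity) <|
    (measure_mem_and_dist_le_le hX hY hXY hYlaw hT (fun y hy => ENNReal.ofReal_le_ofReal (hfM y hy))
      fun x => (Real.volume_pi_closedBall x hr).le).trans_eq ?_
  rw [← ENNReal.ofReal_mul hM, Fintype.card_fin]

lemma integral_pow_le_of_abs_le {Ω : Type*} [MeasurableSpace Ω] {μ : Measure Ω} [IsFiniteMeasure μ]
    {Z : Ω → ℝ} {A : Set Ω} (hA : MeasurableSet A) {b : ℝ} {n : ℕ} (hn : Even n) (hn0 : n ≠ 0)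
    (hZb : ∀ ω, |Z ω| ≤ b) (hZA : ∀ ω ∉ A, Z ω = 0) :
    ∫ ω, Z ω ^ n ∂μ ≤ μ.real A * b ^ n := by
  have hpt (ω : Ω) : Z ω ^ n ≤ A.indicator (fun _ => b ^ n) ω := by
    by_cases hω : ω ∈ A
    · rw [Set.indicator_of_mem hω, ← hn.pow_abs]
      exact pow_le_pow_left₀ (abs_nonneg _) (hZb ω) n
    · rw [Set.indicator_of_notMem hω, hZA ω hω, zero_pow hn0]
  calc ∫ ω, Z ω ^ n ∂μ ≤ ∫ ω, A.indicator (fun _ => b ^ n) ω ∂μ :=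
        integral_mono_of_nonneg (ae_of_all _ fun ω => hn.pow_nonneg _)
          ((integrable_const _).indicator hA) (ae_of_all _ hpt)
    _ = μ.real A * b ^ n := integral_indicator_const _ hA

/-- The paper's `M_n(ζ₁, ζ₂)` at bandwidth `ℓ_n = l`, with `ζᵢ = (xᵢ, eᵢ)`. -/
noncomputable def degenerateKernel {d : ℕ} (L g f : (Fin d → ℝ) → ℝ) (l : ℝ)
    (x₁ x₂ : Fin d → ℝ) (e₁ e₂ : ℝ) : ℝ :=
  l ^ (-(2 * d : ℤ)) *
    ∫ x, L (l⁻¹ • (x - x₁)) * L (l⁻¹ • (x - x₂)) * e₁ * e₂ * g x * (f x₁)⁻¹ * (f x₂)⁻¹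

section DegenerateKernel

variable {d : ℕ} {L g f : (Fin d → ℝ) → ℝ} {s : Set (Fin d → ℝ)} {R K Mb c l α : ℝ}
  {x₁ x₂ : Fin d → ℝ} {e₁ e₂ : ℝ}

lemma degenerateKernel_eq :
    degenerateKernel L g f l x₁ x₂ e₁ e₂ =
      (∫ x, L (l⁻¹ • (x - x₁)) * L (l⁻¹ • (x - x₂)) * g x) *
        (e₁ * e₂ * (f x₁)⁻¹ * (f x₂)⁻¹) / l ^ (2 * d) := by
  rw [degenerateKernel, ← integral_mul_const, zpow_neg, ← Nat.cast_ofNat, ← Nat.cast_mul,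
    zpow_natCast, div_eq_inv_mul]
  congr 2 with x
  ring

lemma near_of_degenerateKernel_ne_zero (hLR : support L ⊆ closedBall 0 R) (hl : 0 < l)
    (hgs : support g ⊆ s) (hRl : R * l < α) (h : degenerateKernel L g f l x₁ x₂ e₁ e₂ ≠ 0) :
    x₁ ∈ thickening α s ∧ dist x₂ x₁ ≤ 2 * (R * l) := by
  obtain ⟨hx₁, -, hdist⟩ := near_of_integral_kernel_pair_ne_zero hLR hl hgs hRl
    fun hJ => h (by rw [degenerateKernel_eq, hJ, zero_mul, zero_div])
  exact ⟨hx₁, hdist⟩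

lemma abs_degenerateKernel_le (hR : 0 ≤ R) (hl : 0 < l) (hRl : R * l < α)
    (hLR : support L ⊆ closedBall 0 R) (hLK : ∀ v, |L v| ≤ K) (hgs : support g ⊆ s)
    (hg1 : ∀ x, |g x| ≤ 1) (hc : 0 < c) (hfc : ∀ x ∈ thickening α s, c ≤ f x)
    (he₁ : |e₁| ≤ Mb) (he₂ : |e₂| ≤ Mb) :
    |degenerateKernel L g f l x₁ x₂ e₁ e₂| ≤ K ^ 2 * Mb ^ 2 * c⁻¹ ^ 2 * (2 * R) ^ d / l ^ d := by
  rw [degenerateKernel_eq]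
  set J := ∫ x, L (l⁻¹ • (x - x₁)) * L (l⁻¹ • (x - x₂)) * g x
  by_cases hJ : J = 0
  · rw [hJ, zero_mul, zero_div, abs_zero]
    positivity
  obtain ⟨hx₁, hx₂, -⟩ := near_of_integral_kernel_pair_ne_zero hLR hl hgs hRl hJ
  have hJle : |J| ≤ K ^ 2 * (2 * (R * l)) ^ d := by
    have hRl0 : 0 ≤ R * l := mul_nonneg hR hl.le
    simpa [measureReal_def, Real.volume_pi_closedBall _ hRl0, ENNReal.toReal_ofReal, hRl0]
      using abs_integral_kernel_pair_le (μ := volume) hLR hLK hg1 hl x₁ x₂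
  have hfinv : ∀ y ∈ thickening α s, |(f y)⁻¹| ≤ c⁻¹ := fun y hy => by
    rw [abs_inv, abs_of_pos (hc.trans_le (hfc y hy))]
    exact inv_anti₀ hc (hfc y hy)
  have hcoef : |e₁ * e₂ * (f x₁)⁻¹ * (f x₂)⁻¹| ≤ Mb ^ 2 * c⁻¹ ^ 2 := by
    have hMb : 0 ≤ Mb := (abs_nonneg _).trans he₁
    rw [abs_mul, abs_mul, abs_mul]
    calc |e₁| * |e₂| * |(f x₁)⁻¹| * |(f x₂)⁻¹| ≤ Mb * Mb * c⁻¹ * c⁻¹ := by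
          gcongr
          exacts [hfinv _ hx₁, hfinv _ hx₂]
      _ = Mb ^ 2 * c⁻¹ ^ 2 := by ring
  rw [abs_div, abs_mul, abs_of_pos (by positivity : (0 : ℝ) < l ^ (2 * d))]
  calc |J| * |e₁ * e₂ * (f x₁)⁻¹ * (f x₂)⁻¹| / l ^ (2 * d)
      ≤ K ^ 2 * (2 * (R * l)) ^ d * (Mb ^ 2 * c⁻¹ ^ 2) / l ^ (2 * d) := by gcongr
    _ = K ^ 2 * Mb ^ 2 * c⁻¹ ^ 2 * (2 * R) ^ d / l ^ d := by
      field_simp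
      ring

end DegenerateKernel

theorem stmt15_general {Ω : Type*} [MeasureSpace Ω] [IsProbabilityMeasure (ℙ : Measure Ω)]
    {d : ℕ} (X1 X2 : Ω → (Fin d → ℝ)) (ε1 ε2 : Ω → ℝ)
    (L : (Fin d → ℝ) → ℝ) (g : (Fin d → ℝ) → ℝ) (f : (Fin d → ℝ) → ℝ)
    (ℓ : ℕ → ℝ) (hℓpos : ∀ n, 0 < ℓ n) (hℓ0 : Tendsto ℓ atTop (𝓝 0))
    (c Mb : ℝ) (hc : 0 < c) (α : ℝ) (hα : 0 < α)
    (hX1 : Measurable X1) (hX2 : Measurable X2)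
    (hL : Continuous L) (hLsupp : HasCompactSupport L)
    (s : Set (Fin d → ℝ)) (hs : IsCompact s) (hg : g = s.indicator 1)
    (hfcont : Continuous f) (hfc : ∀ x ∈ Metric.thickening α s, c ≤ f x)
    (hlaw : Measure.map X1 ℙ = volume.withDensity (fun x => ENNReal.ofReal (f x)))
    (hεbd : ∀ ω, |ε1 ω| ≤ Mb ∧ |ε2 ω| ≤ Mb)
    (hiid : IndepFun (fun ω => (X1 ω, ε1 ω)) (fun ω => (X2 ω, ε2 ω)) ℙ ∧
      IdentDistrib (fun ω => (X1 ω, ε1 ω)) (fun ω => (X2 ω, ε2 ω)) ℙ ℙ) :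
    ∃ C : ℝ, ∀ᶠ n in atTop,
      ∫ ω, (ℓ n ^ (-(2 * d : ℤ)) *
        ∫ x : Fin d → ℝ, L ((ℓ n)⁻¹ • (x - X1 ω)) * L ((ℓ n)⁻¹ • (x - X2 ω)) *
          ε1 ω * ε2 ω * g x * (f (X1 ω))⁻¹ * (f (X2 ω))⁻¹)^4 ∂ℙ
        ≤ C / ℓ n ^ (3 * d) := by
  obtain ⟨R, hR, hLR⟩ := hLsupp.isBounded.subset_closedBall_lt 0 0
  replace hLR : support L ⊆ closedBall 0 R := (subset_tsupport L).trans hLR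
  obtain ⟨K, hK⟩ : ∃ K, ∀ v, |L v| ≤ K := hL.bounded_above_of_compact_support hLsupp
  obtain ⟨Mf, hMf⟩ := (hs.cthickening (r := α)).exists_bound_of_continuousOn hfcont.continuousOn
  have hfMf : ∀ x ∈ thickening α s, f x ≤ max Mf 0 := fun x hx => le_max_of_le_left <|
    (le_abs_self _).trans (hMf x (thickening_subset_cthickening _ _ hx))
  have hgs : support g ⊆ s := hg ▸ Set.support_indicator_subset
  have hg1 (x : Fin d → ℝ) : |g x| ≤ 1 := by
    rw [hg]; by_cases hx : x ∈ s <;> simp [hx]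
  set B := K ^ 2 * Mb ^ 2 * c⁻¹ ^ 2 * (2 * R) ^ d
  refine ⟨max Mf 0 * (4 * R) ^ d * B ^ 4, ?_⟩
  filter_upwards [hℓ0.eventually_lt_const (div_pos hα hR)] with n hn
  have hl := hℓpos n
  have hRl : R * ℓ n < α := by rw [mul_comm]; exact (lt_div_iff₀ hR).1 hn
  set A := {ω | X1 ω ∈ thickening α s ∧ dist (X2 ω) (X1 ω) ≤ 2 * (R * ℓ n)}
  have hA : MeasurableSet A := (hX1 isOpen_thickening.measurableSet).inter
    (measurableSet_le (hX2.dist hX1) measurable_const)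
  calc ∫ ω, degenerateKernel L g f (ℓ n) (X1 ω) (X2 ω) (ε1 ω) (ε2 ω) ^ 4 ∂ℙ
      ≤ Measure.real ℙ A * (B / ℓ n ^ d) ^ 4 :=
      integral_pow_le_of_abs_le hA (by decide) four_ne_zero
        (fun ω => abs_degenerateKernel_le hR.le hl hRl hLR hK hgs hg1 hc hfc (hεbd ω).1 (hεbd ω).2)
        fun ω hω => by_contra fun h => hω (near_of_degenerateKernel_ne_zero hLR hl hgs hRl h)
    _ ≤ max Mf 0 * (2 * (2 * (R * ℓ n))) ^ d * (B / ℓ n ^ d) ^ 4 := by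
      gcongr
      exact measureReal_mem_and_dist_le_le hX2 hX1 (hiid.1.comp measurable_fst measurable_fst).symm
        hlaw isOpen_thickening.measurableSet (le_max_right _ _) hfMf (by positivity)
    _ = max Mf 0 * (4 * R) ^ d * B ^ 4 / ℓ n ^ (3 * d) := by
      field_simp
      ring

/-- Fourth moment order of the degenerate kernel:
`E[M_n⁴(ζ₁,ζ₂)] = O(ℓ_n^{-3d})` as `ℓ_n → 0`. -/
theorem stmt15 {Ω : Type*} [MeasureSpace Ω] [IsProbabilityMeasure (ℙ : Measure Ω)]
    {d : ℕ} (hd : 1 ≤ d) (X1 X2 : Ω → (Fin d → ℝ)) (ε1 ε2 : Ω → ℝ)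
    (L : (Fin d → ℝ) → ℝ) (g : (Fin d → ℝ) → ℝ) (f : (Fin d → ℝ) → ℝ)
    (ℓ : ℕ → ℝ) (hℓpos : ∀ n, 0 < ℓ n) (hℓ0 : Tendsto ℓ atTop (𝓝 0))
    (c Mb : ℝ) (hc : 0 < c) (α : ℝ) (hα : 0 < α)
    (hX1 : Measurable X1) (hX2 : Measurable X2)
    (hε1 : Measurable ε1) (hε2 : Measurable ε2)
    (hL : Continuous L) (hLsupp : HasCompactSupport L)
    (s : Set (Fin d → ℝ)) (hs : IsCompact s) (hg : g = s.indicator 1)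
    (hfcont : Continuous f) (hfc : ∀ x ∈ Metric.thickening α s, c ≤ f x)
    (hlaw : Measure.map X1 ℙ = volume.withDensity (fun x => ENNReal.ofReal (f x)))
    (hεbd : ∀ ω, |ε1 ω| ≤ Mb ∧ |ε2 ω| ≤ Mb)
    (hiid : IndepFun (fun ω => (X1 ω, ε1 ω)) (fun ω => (X2 ω, ε2 ω)) ℙ ∧
      IdentDistrib (fun ω => (X1 ω, ε1 ω)) (fun ω => (X2 ω, ε2 ω)) ℙ ℙ) :
    ∃ C : ℝ, ∀ᶠ n in atTop,
      ∫ ω, (ℓ n ^ (-(2 * d : ℤ)) *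
        ∫ x : Fin d → ℝ, L ((ℓ n)⁻¹ • (x - X1 ω)) * L ((ℓ n)⁻¹ • (x - X2 ω)) *
          ε1 ω * ε2 ω * g x * (f (X1 ω))⁻¹ * (f (X2 ω))⁻¹)^4 ∂ℙ
        ≤ C / ℓ n ^ (3 * d) :=
  stmt15_general X1 X2 ε1 ε2 L g f ℓ hℓpos hℓ0 c Mb hc α hα hX1 hX2 hL hLsupp s hs hg hfcont hfc
    hlaw hεbd hiid
end

section
/- Almost sure approximation of IPCW residuals: if sup_{y ≤ τ'} |G_n(y) − G(y)| = O((log log n / n)^{1/2}) almost surely for every τ' < T_H, G is continuous with G(τ_0) > 0 for some τ_0 < T_H, and ψ is bounded with ψ = 0 on (τ_0, ∞), then ε_i^* := δ_i ψ(Z_i)/G_n(Z_i) − m_ψ(X_i) satisfies ε_i^* = ε_i + O((log log n / n)^{1/2}) almost surely uniformly in i ≤ n, where ε_i = δ_i ψ(Z_i)/G(Z_i) − m_ψ(X_i). -/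
open MeasureTheory ProbabilityTheory Filter
open scoped BigOperators Topology

lemma sqrt_loglog_tendsto :
    Tendsto (fun n : ℕ => Real.sqrt (Real.log (Real.log n) / n)) atTop (𝓝 0) := by
  have h1 : Tendsto (fun n : ℕ => Real.log (Real.log n) / n) atTop (𝓝 0) := by
    have hlog : Tendsto (fun x : ℝ => Real.log x / x) atTop (𝓝 0) :=
      Real.isLittleO_log_id_atTop.tendsto_div_nhds_zero
    have h2 : Tendsto (fun n : ℕ => Real.log n / n) atTop (𝓝 0) :=
      hlog.comp tendsto_natCast_atTop_atTop
    refine tendsto_of_tendsto_of_tendsto_of_le_of_le' tendsto_const_nhds h2 ?_ ?_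
    · filter_upwards [eventually_ge_atTop 3] with n hn
      have h3 : (3:ℝ) ≤ n := by exact_mod_cast hn
      have he : Real.exp 1 ≤ (n:ℝ) := by
        have := Real.exp_one_lt_d9; linarith
      have h1le : (1:ℝ) ≤ Real.log n := by
        calc (1:ℝ) = Real.log (Real.exp 1) := (Real.log_exp 1).symm
          _ ≤ Real.log n := Real.log_le_log (Real.exp_pos 1) he
      have : (0:ℝ) ≤ Real.log (Real.log n) := Real.log_nonneg h1le
      positivity
    · filter_upwards [eventually_ge_atTop 3] with n hn
      have h3 : (3:ℝ) ≤ n := by exact_mod_cast hn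
      have hn' : (0:ℝ) < n := by linarith
      have hl : Real.log (Real.log n) ≤ Real.log n := by
        apply Real.log_le_self
        apply Real.log_nonneg; linarith
      gcongr
  have := (Real.continuous_sqrt.tendsto 0).comp h1
  simpa only [Function.comp_def, Real.sqrt_zero] using this

/-- Almost sure approximation of IPCW residuals: if the
Kaplan–Meier estimator satisfies `sup_{y ≤ τ'} |G_n(y) − G(y)| = O(√(log log n / n))`
a.s. for every `τ' < T_H`, `G` is continuous with `G(τ₀) > 0` for some `τ₀ < T_H`,
and `ψ` is bounded with `ψ = 0` on `(τ₀, ∞)`, then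
`ε_i^* = δ_i ψ(Z_i)/G_n(Z_i) − m_ψ(X_i)` satisfies
`ε_i^* = ε_i + O(√(log log n / n))` a.s., uniformly in `i ≤ n`. -/
theorem stmt19 {Ω : Type*} [MeasureSpace Ω] [IsProbabilityMeasure (ℙ : Measure Ω)]
    {d : ℕ} (X : ℕ → Ω → (Fin d → ℝ)) (Y C : ℕ → Ω → ℝ)
    (ψ : ℝ → ℝ) (G : ℝ → ℝ) (Gn : ℕ → Ω → ℝ → ℝ)
    (mψ : (Fin d → ℝ) → ℝ) (τ₀ TH M M' : ℝ)
    (hGcont : Continuous G) (hτ₀ : τ₀ < TH) (hGτ₀ : 0 < G τ₀)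
    (hGanti : Antitone G) (hG0 : ∀ t, 0 ≤ G t)
    (hψbd : ∀ t, |ψ t| ≤ M) (hψ0 : ∀ t, τ₀ < t → ψ t = 0)
    (hmbd : ∀ x, |mψ x| ≤ M')
    (hKM : ∀ τ' < TH, ∀ᵐ ω ∂(ℙ : Measure Ω), ∃ K : ℝ, ∃ N : ℕ, ∀ n ≥ N,
      ∀ y ≤ τ', |Gn n ω y - G y| ≤
        K * Real.sqrt (Real.log (Real.log n) / n)) :
    ∀ᵐ ω ∂(ℙ : Measure Ω), ∃ K : ℝ, ∃ N : ℕ, ∀ n ≥ N, ∀ i ≤ n,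
      |((if Y i ω ≤ C i ω then (1:ℝ) else 0) * ψ (min (Y i ω) (C i ω)) /
          Gn n ω (min (Y i ω) (C i ω)) - mψ (X i ω)) -
        ((if Y i ω ≤ C i ω then (1:ℝ) else 0) * ψ (min (Y i ω) (C i ω)) /
          G (min (Y i ω) (C i ω)) - mψ (X i ω))| ≤
      K * Real.sqrt (Real.log (Real.log n) / n) := by
  have hM : 0 ≤ M := le_trans (abs_nonneg _) (hψbd 0)
  filter_upwards [hKM τ₀ hτ₀] with ω hω
  obtain ⟨K, N, hKN⟩ := hω
  set K' := max K 0 with hK'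
  have hK'0 : 0 ≤ K' := le_max_right _ _
  have hev : ∀ᶠ n : ℕ in atTop,
      K' * Real.sqrt (Real.log (Real.log n) / n) ≤ G τ₀ / 2 := by
    have h := (sqrt_loglog_tendsto.const_mul K')
    rw [mul_zero] at h
    exact h.eventually (eventually_le_nhds (by positivity))
  obtain ⟨N₁, hN₁⟩ := eventually_atTop.mp hev
  refine ⟨M * K' / (G τ₀ / 2 * G τ₀), max N N₁, ?_⟩
  intro n hn i hi
  set s := Real.sqrt (Real.log (Real.log n) / n) with hs
  have hs0 : 0 ≤ s := Real.sqrt_nonneg _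
  have hnN : n ≥ N := le_trans (le_max_left _ _) hn
  have hsmall : K' * s ≤ G τ₀ / 2 := hN₁ n (le_trans (le_max_right _ _) hn)
  set z := min (Y i ω) (C i ω) with hz
  by_cases hδ : Y i ω ≤ C i ω
  · simp only [if_pos hδ, one_mul]
    by_cases hzτ : z ≤ τ₀
    · have hGz : G τ₀ ≤ G z := hGanti hzτ
      have hGn : |Gn n ω z - G z| ≤ K' * s :=
        le_trans (hKN n hnN z hzτ) (mul_le_mul_of_nonneg_right (le_max_left _ _) hs0)
      have hGnz : G τ₀ / 2 ≤ Gn n ω z := by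
        have h1 : G z - Gn n ω z ≤ K' * s :=
          le_trans (le_abs_self _) (by rwa [abs_sub_comm] at hGn)
        linarith
      have hGzpos : 0 < G z := lt_of_lt_of_le hGτ₀ hGz
      have hGnpos : 0 < Gn n ω z := lt_of_lt_of_le (by linarith) hGnz
      have hrw : ψ z / Gn n ω z - mψ (X i ω) - (ψ z / G z - mψ (X i ω))
          = ψ z * (G z - Gn n ω z) / (Gn n ω z * G z) := by
        field_simp
        ring
      rw [hrw, abs_div, abs_mul, abs_of_pos (mul_pos hGnpos hGzpos)]
      have hnum : |ψ z| * |G z - Gn n ω z| ≤ M * (K' * s) :=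
        mul_le_mul (hψbd z) (by rwa [abs_sub_comm] at hGn) (abs_nonneg _) hM
      have hden : G τ₀ / 2 * G τ₀ ≤ Gn n ω z * G z :=
        mul_le_mul hGnz hGz (le_of_lt hGτ₀) (le_of_lt hGnpos)
      calc |ψ z| * |G z - Gn n ω z| / (Gn n ω z * G z)
          ≤ M * (K' * s) / (G τ₀ / 2 * G τ₀) :=
            div_le_div₀ (by positivity) hnum (by positivity) hden
        _ = M * K' / (G τ₀ / 2 * G τ₀) * s := by ring
    · push_neg at hzτ
      rw [hψ0 z hzτ]
      simp only [zero_div, zero_sub, sub_sub_cancel, neg_add_cancel, abs_zero, sub_self]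
      positivity
  · simp only [if_neg hδ, zero_mul, zero_div, zero_sub, sub_sub_cancel, neg_add_cancel,
      abs_zero, sub_self]
    positivity
end
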